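/- Let H be the subgroup of GL₂(ℤ/8ℤ) generated by the four matrices [[4,3],[1,4]], [[2,1],[1,2]], [[3,6],[2,7]], [[1,2],[6,3]]. Then H has order 2⁶ = 64 (hence index 2³·3 = 24 in GL₂(ℤ/8ℤ)) and H contains exactly 16 elements of trace 0. -/

import Mathlib

/-!
In a finite group the subgroup generated by `S` is the submonoid generated by `S`, which is the
smallest set containing `1` and stable under right multiplication by `S`. Starting from `{1}` and
closing up under right multiplication by the four generators (viewed as matrices over `ℤ/8ℤ`)
stabilises after four rounds at a set of `64` matrices, of which `16` have trace `0`. The index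
follows from `|GL₂(ℤ/8ℤ)| = 1536`, the number of `2 × 2` matrices over `ℤ/8ℤ` with unit determinant.
-/

open Pointwise

namespace Submonoid

variable {M : Type*} [Monoid M]

theorem closure_subset_of_one_mem_of_mul_subset {S T : Set M} (h1 : 1 ∈ T) (hmul : T * S ⊆ T) :
    (closure S : Set M) ⊆ T := by
  intro x hx
  induction hx using closure_induction_right with
  | one => exact h1
  | mul_right x _ y hy ih => exact hmul (Set.mul_mem_mul ih hy)

end Submonoid

section RightMulSaturation

variable {M : Type*} [Monoid M] [DecidableEq M]

def rightMulSaturationStep (S T : Finset M) : Finset M := T ∪ T * S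

def rightMulSaturation (S : Finset M) (n : ℕ) : Finset M := (rightMulSaturationStep S)^[n] {1}

theorem rightMulSaturation_succ (S : Finset M) (n : ℕ) :
    rightMulSaturation S (n + 1) = rightMulSaturationStep S (rightMulSaturation S n) :=
  Function.iterate_succ_apply' _ _ _

theorem one_mem_rightMulSaturation (S : Finset M) (n : ℕ) : (1 : M) ∈ rightMulSaturation S n := by
  induction n with
  | zero => exact Finset.mem_singleton_self 1
  | succ n ih => exact rightMulSaturation_succ S n ▸ Finset.mem_union_left _ ih

theorem coe_rightMulSaturation_subset_closure (S : Finset M) (n : ℕ) :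
    (rightMulSaturation S n : Set M) ⊆ Submonoid.closure (S : Set M) := by
  induction n with
  | zero => simp [rightMulSaturation]
  | succ n ih =>
    rw [rightMulSaturation_succ, rightMulSaturationStep, Finset.coe_union, Finset.coe_mul]
    exact Set.union_subset ih <|
      (Set.mul_subset_mul ih Submonoid.subset_closure).trans (Submonoid.coe_mul_self_eq _).le

theorem Submonoid.coe_closure_eq_rightMulSaturation {S : Finset M} {n : ℕ}
    (hfix : rightMulSaturationStep S (rightMulSaturation S n) = rightMulSaturation S n) :
    (Submonoid.closure (S : Set M) : Set M) = rightMulSaturation S n := by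
  refine (Submonoid.closure_subset_of_one_mem_of_mul_subset
    (one_mem_rightMulSaturation S n) ?_).antisymm (coe_rightMulSaturation_subset_closure S n)
  rw [← Finset.coe_mul, Finset.coe_subset]
  exact Finset.subset_union_right.trans hfix.le

end RightMulSaturation

theorem Subgroup.image_closure_of_finite {G M : Type*} [Group G] [Finite G] [Monoid M]
    (f : G →* M) (S : Set G) : f '' closure S = Submonoid.closure (f '' S) := by
  rw [← Subgroup.coe_toSubmonoid, closure_toSubmonoid_of_finite, ← Submonoid.coe_map,
    MonoidHom.map_mclosure]

theorem Nat.card_units_eq_card_isUnit (M : Type*) [Monoid M] :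
    Nat.card Mˣ = Nat.card {a : M // IsUnit a} :=
  Nat.card_congr (Equiv.ofInjective _ Units.val_injective)

theorem Matrix.card_GL_eq_card_isUnit_det (n R : Type*) [Fintype n] [DecidableEq n] [CommRing R] :
    Nat.card (GL n R) = Nat.card {A : Matrix n n R // IsUnit A.det} :=
  (Nat.card_units_eq_card_isUnit _).trans <|
    Nat.card_congr (Equiv.subtypeEquivRight Matrix.isUnit_iff_isUnit_det)

theorem card_GL_two_zmod_eight : Nat.card (GL (Fin 2) (ZMod 8)) = 1536 := by
  rw [Matrix.card_GL_eq_card_isUnit_det, Nat.card_eq_fintype_card]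
  decide +kernel

def mod8Generators : Finset (Matrix (Fin 2) (Fin 2) (ZMod 8)) :=
  {!![4, 3; 1, 4], !![2, 1; 1, 2], !![3, 6; 2, 7], !![1, 2; 6, 3]}

theorem rightMulSaturation_mod8Generators :
    rightMulSaturationStep mod8Generators (rightMulSaturation mod8Generators 4) =
      rightMulSaturation mod8Generators 4 ∧
    (rightMulSaturation mod8Generators 4).card = 64 ∧
    ((rightMulSaturation mod8Generators 4).filter (fun A => A.trace = 0)).card = 16 := by
  decide +kernel

theorem galois_image_mod8 (u₁ u₂ u₃ u₄ : GL (Fin 2) (ZMod 8))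
    (h₁ : (u₁ : Matrix (Fin 2) (Fin 2) (ZMod 8)) = !![4, 3; 1, 4])
    (h₂ : (u₂ : Matrix (Fin 2) (Fin 2) (ZMod 8)) = !![2, 1; 1, 2])
    (h₃ : (u₃ : Matrix (Fin 2) (Fin 2) (ZMod 8)) = !![3, 6; 2, 7])
    (h₄ : (u₄ : Matrix (Fin 2) (Fin 2) (ZMod 8)) = !![1, 2; 6, 3]) :
    Nat.card (Subgroup.closure ({u₁, u₂, u₃, u₄} :
        Set (GL (Fin 2) (ZMod 8)))) = 64 ∧
    (Subgroup.closure ({u₁, u₂, u₃, u₄} :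
        Set (GL (Fin 2) (ZMod 8)))).index = 24 ∧
    {u : GL (Fin 2) (ZMod 8) |
        u ∈ Subgroup.closure ({u₁, u₂, u₃, u₄} : Set (GL (Fin 2) (ZMod 8))) ∧
        Matrix.trace (u : Matrix (Fin 2) (Fin 2) (ZMod 8)) = 0}.ncard = 16 := by
  set H := Subgroup.closure ({u₁, u₂, u₃, u₄} : Set (GL (Fin 2) (ZMod 8)))
  obtain ⟨hfix, hcard, htrace⟩ := rightMulSaturation_mod8Generators
  have hgens : Units.val '' ({u₁, u₂, u₃, u₄} : Set (GL (Fin 2) (ZMod 8))) = mod8Generators := by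
    simp [mod8Generators, Set.image_insert_eq, h₁, h₂, h₃, h₄]
  have hH : Units.val '' (H : Set (GL (Fin 2) (ZMod 8))) =
      rightMulSaturation mod8Generators 4 := by
    rw [← Submonoid.coe_closure_eq_rightMulSaturation hfix, ← hgens]
    exact Subgroup.image_closure_of_finite (Units.coeHom _) _
  have hcardH : Nat.card H = 64 := by
    rw [← SetLike.coe_sort_coe, ← Nat.card_image_of_injective Units.val_injective, hH,
      Nat.card_coe_set_eq, Set.ncard_coe_finset, hcard]
  refine ⟨hcardH, ?_, ?_⟩
  · have := H.index_mul_card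
    rw [hcardH, card_GL_two_zmod_eight] at this
    omega
  · rw [← Set.ncard_image_of_injective _ Units.val_injective,
      show {u | u ∈ H ∧ Matrix.trace (u : Matrix (Fin 2) (Fin 2) (ZMod 8)) = 0} =
        (H : Set (GL (Fin 2) (ZMod 8))) ∩ Units.val ⁻¹' {A | A.trace = 0} from rfl,
      Set.image_inter_preimage, hH, ← htrace, ← Set.ncard_coe_finset, Finset.coe_filter]
    rfl
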